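/- A complete multipartite graph is 1-extendable if and only if all its parts have the same cardinality. -/

import Mathlib

open scoped Classical

variable {V : Type*}

/-- `S` is an independent set of the graph `G`. -/
def IndepF (G : SimpleGraph V) (S : Finset V) : Prop :=
  ∀ u ∈ S, ∀ v ∈ S, ¬ G.Adj u v

/-- The independence number of `G`. -/
noncomputable def alphaN [Fintype V] (G : SimpleGraph V) : ℕ :=
  Finset.univ.powerset.sup fun S => if IndepF G S then S.card else 0

/-- `G` is 1-extendable: every vertex belongs to a maximum independent set. -/
def OneExt [Fintype V] (G : SimpleGraph V) : Prop :=
  ∀ v : V, ∃ S : Finset V, v ∈ S ∧ IndepF G S ∧ S.card = alphaN G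

/-- The 1-extendable chromatic number of `G`. -/
noncomputable def chiOneExt [Fintype V] (G : SimpleGraph V) : ℕ :=
  sInf {k | ∃ c : V → Fin k, ∀ i : Fin k, OneExt (G.induce {v | c v = i})}

/-- The join (complete sum) of two graphs. -/
def gJoin {α β : Type*} (G : SimpleGraph α) (H : SimpleGraph β) : SimpleGraph (α ⊕ β) where
  Adj u v := match u, v with
    | Sum.inl u, Sum.inl v => G.Adj u v
    | Sum.inr u, Sum.inr v => H.Adj u v
    | Sum.inl _, Sum.inr _ => True
    | Sum.inr _, Sum.inl _ => True
  symm := ⟨by rintro (u|u) (v|v) h <;> simp_all [SimpleGraph.adj_comm]⟩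
  loopless := ⟨by rintro (u|u) h <;> simp_all⟩

/-! In a complete multipartite graph an independent set lies inside a single part, so the
independence number is the size of a largest part, and a vertex lies in a maximum independent
set exactly when its own part is a largest one. Every vertex does so iff all parts have the
same size. -/

open Finset

section IndependenceNumber

variable [Fintype V] {G : SimpleGraph V}

theorem IndepF.card_le_alphaN {S : Finset V} (hS : IndepF G S) : S.card ≤ alphaN G := by
  simpa [alphaN, hS] using
    le_sup (f := fun S : Finset V => if IndepF G S then S.card else 0)
      (mem_powerset.2 (subset_univ S))

theorem alphaN_le {k : ℕ} (h : ∀ S, IndepF G S → S.card ≤ k) : alphaN G ≤ k :=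
  Finset.sup_le fun S _ => by
    split_ifs with hS
    exacts [h S hS, Nat.zero_le k]

end IndependenceNumber

section CompleteMultipartite

variable {ι : Type*} {p : V → ι} {G : SimpleGraph V}

theorem indepF_iff_of_adj_iff_ne (hG : ∀ u v, G.Adj u v ↔ p u ≠ p v) (S : Finset V) :
    IndepF G S ↔ ∀ u ∈ S, ∀ v ∈ S, p u = p v := by
  simp only [IndepF, hG, ne_eq, not_not]

variable [Fintype V]

theorem indepF_filter_eq (hG : ∀ u v, G.Adj u v ↔ p u ≠ p v) (i : ι) :
    IndepF G (univ.filter fun v => p v = i) := by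
  rw [indepF_iff_of_adj_iff_ne hG]
  intro u hu v hv
  rw [(mem_filter.1 hu).2, (mem_filter.1 hv).2]

theorem IndepF.subset_filter_eq (hG : ∀ u v, G.Adj u v ↔ p u ≠ p v) {S : Finset V}
    (hS : IndepF G S) {v : V} (hv : v ∈ S) : S ⊆ univ.filter fun u => p u = p v :=
  fun u hu => mem_filter.2 ⟨mem_univ u, (indepF_iff_of_adj_iff_ne hG S).1 hS u hu v hv⟩

theorem alphaN_le_of_card_filter_eq_le (hG : ∀ u v, G.Adj u v ↔ p u ≠ p v) {k : ℕ}
    (h : ∀ i, (univ.filter fun v => p v = i).card ≤ k) : alphaN G ≤ k := by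
  refine alphaN_le fun S hS => ?_
  obtain rfl | ⟨v, hv⟩ := S.eq_empty_or_nonempty
  · exact Nat.zero_le k
  · exact (card_le_card (hS.subset_filter_eq hG hv)).trans (h (p v))

theorem oneExt_iff_card_filter_eq_alphaN (hG : ∀ u v, G.Adj u v ↔ p u ≠ p v) :
    OneExt G ↔ ∀ v, (univ.filter fun u => p u = p v).card = alphaN G := by
  refine ⟨fun h v => ?_, fun h v => ⟨_, by simp, indepF_filter_eq hG (p v), h v⟩⟩
  obtain ⟨S, hvS, hS, hcard⟩ := h v
  refine le_antisymm (indepF_filter_eq hG (p v)).card_le_alphaN ?_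
  exact hcard ▸ card_le_card (hS.subset_filter_eq hG hvS)

end CompleteMultipartite

theorem completeMultipartite_oneExt_iff_general {ι : Type*} [Fintype V]
    (p : V → ι) (hp : Function.Surjective p) (G : SimpleGraph V)
    (hG : ∀ u v : V, G.Adj u v ↔ p u ≠ p v) :
    OneExt G ↔ ∀ i j : ι,
      (Finset.univ.filter (fun v => p v = i)).card =
      (Finset.univ.filter (fun v => p v = j)).card := by
  rw [oneExt_iff_card_filter_eq_alphaN hG]
  constructor
  · intro h i j
    obtain ⟨u, rfl⟩ := hp i
    obtain ⟨w, rfl⟩ := hp j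
    rw [h u, h w]
  · intro hbal v
    exact le_antisymm (indepF_filter_eq hG (p v)).card_le_alphaN
      (alphaN_le_of_card_filter_eq_le hG fun i => (hbal i (p v)).le)

/-- A complete multipartite graph (parts are the fibers of ) is 1-extendable iff
it is balanced, i.e. all parts have the same cardinality. -/
theorem completeMultipartite_oneExt_iff {ι : Type*} [Fintype V] [Fintype ι]
    (p : V → ι) (hp : Function.Surjective p) (G : SimpleGraph V)
    (hG : ∀ u v : V, G.Adj u v ↔ p u ≠ p v) :
    OneExt G ↔ ∀ i j : ι,
      (Finset.univ.filter (fun v => p v = i)).card =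
      (Finset.univ.filter (fun v => p v = j)).card :=
  completeMultipartite_oneExt_iff_general p hp G hG
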